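/- Let A, B be positive semidefinite symmetric m×m real matrices with A ⪯ B (i.e. B − A positive semidefinite). Then |A^{1/2} − B^{1/2}|_F² ≤ tr(B − A) = |B − A|_*. -/

import Mathlib

/-!
Write `X = √A` and `Y = √B`. Expanding the square and using `tr (YX) = tr (XY)`,
`tr (Y² - X²) - ‖Y - X‖_F² = 2 tr (X (Y - X))`. The square root is operator monotone, so
`Y - X ⪰ 0`, and the trace of a product of two positive semidefinite matrices is nonnegative.
Operator monotonicity comes from an eigenvector `v` of `Y - X` with eigenvalue `μ`:
`vᵀ (Y² - X²) v = μ (vᵀ Y v + vᵀ X v)`, and for `μ < 0` this forces `Yv = Xv = 0`.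
-/

open Matrix

noncomputable def Matrix.PosSemidef.sqrt {n : Type*} [Fintype n] [DecidableEq n]
    {A : Matrix n n ℝ} (hA : A.PosSemidef) : Matrix n n ℝ :=
  hA.1.eigenvectorUnitary.1 * diagonal ((↑) ∘ (√·) ∘ hA.1.eigenvalues) *
  (star hA.1.eigenvectorUnitary : Matrix n n ℝ)

noncomputable def frob {m : ℕ} (M : Matrix (Fin m) (Fin m) ℝ) : ℝ :=
  Real.sqrt (∑ i, ∑ j, (M i j) ^ 2)

noncomputable def nuclear {m : ℕ} (M : Matrix (Fin m) (Fin m) ℝ)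
    (hM : M.IsHermitian) : ℝ :=
  ∑ i, |hM.eigenvalues i|

open scoped MatrixOrder ComplexOrder

namespace Matrix

variable {n : Type*} [Fintype n] [DecidableEq n]

theorem PosSemidef.sqrt_eq_cfcSqrt {A : Matrix n n ℝ} (hA : A.PosSemidef) :
    hA.sqrt = CFC.sqrt A := by
  rw [CFC.sqrt_eq_real_sqrt A hA.nonneg, cfcₙ_eq_cfc, hA.1.cfc_eq]
  rfl

theorem PosSemidef.trace_mul_nonneg {𝕜 : Type*} [RCLike 𝕜] {P Q : Matrix n n 𝕜}
    (hP : P.PosSemidef) (hQ : Q.PosSemidef) : 0 ≤ (P * Q).trace := by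
  have hS : (CFC.sqrt P).IsHermitian := (CFC.sqrt_nonneg P).posSemidef.isHermitian
  have hconj := hQ.conjTranspose_mul_mul_same (CFC.sqrt P)
  rw [hS.eq] at hconj
  rw [← CFC.sqrt_mul_sqrt_self P hP.nonneg, Matrix.mul_assoc, trace_mul_comm, Matrix.mul_assoc]
  simpa only [Matrix.mul_assoc] using hconj.trace_nonneg

theorem trace_sub_mul_sub_le {𝕜 : Type*} [RCLike 𝕜] {X Y : Matrix n n 𝕜} (hX : 0 ≤ X)
    (hXY : X ≤ Y) : ((Y - X) * (Y - X)).trace ≤ (Y * Y - X * X).trace := by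
  have hcross : 0 ≤ (X * (Y - X)).trace := hX.posSemidef.trace_mul_nonneg hXY
  have hexpand : Y * Y - X * X = (Y - X) * (Y - X) + (X * (Y - X) + (Y - X) * X) := by
    noncomm_ring
  rw [hexpand, trace_add, trace_add, trace_mul_comm (Y - X) X]
  exact le_add_of_nonneg_right (add_nonneg hcross hcross)

theorem IsHermitian.dotProduct_mul_self_sub_mul_self_mulVec {X Y : Matrix n n ℝ}
    (hD : (Y - X).IsHermitian) {v : n → ℝ} {μ : ℝ} (hv : (Y - X) *ᵥ v = μ • v) :
    v ⬝ᵥ ((Y * Y - X * X) *ᵥ v) = μ * (v ⬝ᵥ (Y *ᵥ v) + v ⬝ᵥ (X *ᵥ v)) := by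
  have hsplit : Y * Y - X * X = Y * (Y - X) + (Y - X) * X := by noncomm_ring
  have hvD : v ᵥ* (Y - X) = μ • v := by
    rw [← hv, ← mulVec_transpose, ← conjTranspose_eq_transpose_of_trivial, hD.eq]
  rw [hsplit, add_mulVec, ← mulVec_mulVec, ← mulVec_mulVec, hv, dotProduct_add, mulVec_smul,
    dotProduct_mulVec v (Y - X), hvD]
  simp only [dotProduct_smul, smul_dotProduct, smul_eq_mul]
  ring

theorem le_of_mul_self_le_mul_self {X Y : Matrix n n ℝ} (hX : 0 ≤ X) (hY : 0 ≤ Y)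
    (h : X * X ≤ Y * Y) : X ≤ Y := by
  have hD : (Y - X).IsHermitian := hY.posSemidef.1.sub hX.posSemidef.1
  refine le_iff.mpr (hD.posSemidef_iff_eigenvalues_nonneg.mpr fun i => ?_)
  change 0 ≤ hD.eigenvalues i
  set μ := hD.eigenvalues i
  set v : n → ℝ := ⇑(hD.eigenvectorBasis i)
  have hv : (Y - X) *ᵥ v = μ • v := hD.mulVec_eigenvectorBasis i
  have hv0 : v ≠ 0 := fun h0 =>
    hD.eigenvectorBasis.orthonormal.ne_zero i (by ext j; exact congrFun h0 j)
  by_contra! hμ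
  have hYv : 0 ≤ v ⬝ᵥ (Y *ᵥ v) := by simpa using hY.posSemidef.dotProduct_mulVec_nonneg v
  have hXv : 0 ≤ v ⬝ᵥ (X *ᵥ v) := by simpa using hX.posSemidef.dotProduct_mulVec_nonneg v
  have hquad : 0 ≤ μ * (v ⬝ᵥ (Y *ᵥ v) + v ⬝ᵥ (X *ᵥ v)) := by
    rw [← hD.dotProduct_mul_self_sub_mul_self_mulVec hv]
    simpa using (le_iff.mp h).dotProduct_mulVec_nonneg v
  have hsum : v ⬝ᵥ (Y *ᵥ v) + v ⬝ᵥ (X *ᵥ v) = 0 := by nlinarith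
  have hYv0 : Y *ᵥ v = 0 :=
    (hY.posSemidef.dotProduct_mulVec_zero_iff v).mp (by simp only [star_trivial]; linarith)
  have hXv0 : X *ᵥ v = 0 :=
    (hX.posSemidef.dotProduct_mulVec_zero_iff v).mp (by simp only [star_trivial]; linarith)
  rw [sub_mulVec, hYv0, hXv0, sub_zero, eq_comm, smul_eq_zero] at hv
  exact hv.elim hμ.ne hv0

end Matrix

theorem frob_sq_eq_trace_mul_transpose {m : ℕ} (M : Matrix (Fin m) (Fin m) ℝ) :
    frob M ^ 2 = (M * Mᵀ).trace := by
  rw [frob, Real.sq_sqrt (by positivity)]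
  simp [trace, mul_apply, sq]

theorem nuclear_eq_trace {m : ℕ} {M : Matrix (Fin m) (Fin m) ℝ} (hM : M.PosSemidef) :
    nuclear M hM.1 = M.trace := by
  simp only [nuclear, hM.1.trace_eq_sum_eigenvalues, abs_of_nonneg (hM.eigenvalues_nonneg _)]
  rfl

/-- Monotone Powers–Størmer: if `A ⪯ B` then `|√A − √B|_F² ≤ tr(B − A) = |B − A|_*`. -/
theorem powers_stormer_monotone {m : ℕ} (A B : Matrix (Fin m) (Fin m) ℝ)
    (hA : A.PosSemidef) (hB : B.PosSemidef) (hBA : (B - A).PosSemidef) :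
    frob (hA.sqrt - hB.sqrt) ^ 2 ≤ (B - A).trace ∧
    (B - A).trace = nuclear (B - A) hBA.1 := by
  rw [nuclear_eq_trace hBA, hA.sqrt_eq_cfcSqrt, hB.sqrt_eq_cfcSqrt]
  refine ⟨?_, rfl⟩
  set X := CFC.sqrt A
  set Y := CFC.sqrt B
  have hX : 0 ≤ X := CFC.sqrt_nonneg A
  have hXX : X * X = A := CFC.sqrt_mul_sqrt_self A hA.nonneg
  have hYY : Y * Y = B := CFC.sqrt_mul_sqrt_self B hB.nonneg
  have hXY : X ≤ Y := le_of_mul_self_le_mul_self hX (CFC.sqrt_nonneg B) (by rwa [hXX, hYY])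
  have hsymm : (X - Y)ᵀ = X - Y := by
    rw [← conjTranspose_eq_transpose_of_trivial]
    exact hX.posSemidef.1.sub (CFC.sqrt_nonneg B).posSemidef.1
  calc frob (X - Y) ^ 2 = ((Y - X) * (Y - X)).trace := by
        rw [frob_sq_eq_trace_mul_transpose, hsymm]
        congr 1
        noncomm_ring
    _ ≤ (Y * Y - X * X).trace := trace_sub_mul_sub_le hX hXY
    _ = (B - A).trace := by rw [hXX, hYY]
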